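/- For any superport network with m > p, with L its response matrix, C the response matrix of the electrical network obtained by unifying all the superports, and C̃ the matrix obtained from C by removing the last row and the last column: det L · Σ_{I,J valid} det C_I^J = det C̃, where the sum is over all ordered pairs of valid sets I, J; moreover Σ_{I,J valid} det C_I^J ≠ 0, so det L = det C̃ / Σ_{I,J valid} det C_I^J. -/

import Mathlib

open Finset BigOperators
open scoped Classical

namespace Superport

/-- A superport network: a finite connected simple graph on `Fin n` with conductances `c`
and `p` nonempty pairwise disjoint superports `A 0, …, A (p-1)` occupying the initial
segment of the vertices, ordered consecutively. -/
structure Network where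
  n : ℕ
  p : ℕ
  graph : SimpleGraph (Fin n)
  c : Fin n → Fin n → ℝ
  A : Fin p → Finset (Fin n)
  p_pos : 0 < p
  connected : graph.Connected
  c_symm : ∀ k l, c k l = c l k
  c_pos : ∀ k l, graph.Adj k l → 0 < c k l
  c_zero : ∀ k l, ¬ graph.Adj k l → c k l = 0
  A_nonempty : ∀ i, (A i).Nonempty
  A_disjoint : ∀ i j, i ≠ j → Disjoint (A i) (A j)
  A_ordered : ∀ i j u v, i < j → u ∈ A i → v ∈ A j → u < v
  boundary_initial : ∀ v : Fin n, (∃ i, v ∈ A i) ↔ (v : ℕ) < ∑ i, (A i).card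

namespace Network

variable (N : Network)

/-- The set of boundary vertices. -/
def M : Finset (Fin N.n) := Finset.univ.biUnion N.A

/-- The number of boundary vertices. -/
def m : ℕ := N.M.card

theorem mem_M_iff {v : Fin N.n} : v ∈ N.M ↔ ∃ i, v ∈ N.A i := by
  simp [M, Finset.mem_biUnion]

/-- The root of the superport of a boundary vertex `v` (the vertex of maximal number
in the superport containing `v`); for interior `v` we set `root v = v`. -/
noncomputable def root (v : Fin N.n) : Fin N.n :=
  if h : ∃ i, v ∈ N.A i then (N.A h.choose).max' ⟨v, h.choose_spec⟩ else v

/-- The index of the last superport. -/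
def lastPort : Fin N.p := ⟨N.p - 1, Nat.sub_lt N.p_pos Nat.one_pos⟩

theorem M_nonempty : N.M.Nonempty := by
  obtain ⟨v, hv⟩ := N.A_nonempty N.lastPort
  exact ⟨v, N.mem_M_iff.mpr ⟨N.lastPort, hv⟩⟩

theorem root_mem {v : Fin N.n} (hv : v ∈ N.M) : N.root v ∈ N.M := by
  have h : ∃ i, v ∈ N.A i := N.mem_M_iff.mp hv
  rw [root, dif_pos h]
  exact N.mem_M_iff.mpr ⟨h.choose, (N.A h.choose).max'_mem _⟩

theorem root_eq_self_of_max {v : Fin N.n} (hv : v ∈ N.M) (hmax : ∀ u ∈ N.M, u ≤ v) :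
    N.root v = v := by
  have h : ∃ i, v ∈ N.A i := N.mem_M_iff.mp hv
  rw [root, dif_pos h]
  exact le_antisymm (hmax _ (N.mem_M_iff.mpr ⟨h.choose, (N.A h.choose).max'_mem _⟩))
    (Finset.le_max' _ _ h.choose_spec)

/-- Axioms (C), (I), (P), (B) for voltages `U`, currents `I`, and prescribed voltage
differences `ΔU` (only the values of `ΔU` at non-root boundary vertices are relevant). -/
def Axioms (ΔU U : Fin N.n → ℝ) (I : Fin N.n → Fin N.n → ℝ) : Prop :=
  (∀ k l, I k l = N.c k l * (U k - U l)) ∧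
  (∀ k, k ∉ N.M → ∑ l, I k l = 0) ∧
  (∀ i : Fin N.p, i ≠ N.lastPort → ∑ k ∈ N.A i, ∑ l, I k l = 0) ∧
  (∀ k, k ∈ N.M → N.root k ≠ k → U k - U (N.root k) = ΔU k)

/-- The weight of a subgraph: the product of the conductances of its edges. -/
noncomputable def weight (H : SimpleGraph (Fin N.n)) : ℝ :=
  ∏ e ∈ (Set.toFinite H.edgeSet).toFinset, Sym2.lift ⟨N.c, N.c_symm⟩ e

/-- The number of edges of a subgraph. -/
noncomputable def edgeCount (H : SimpleGraph (Fin N.n)) : ℕ :=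
  (Set.toFinite H.edgeSet).toFinset.card

/-- Two vertices lie in a common superport. -/
def samePort (u v : Fin N.n) : Prop := ∃ i, u ∈ N.A i ∧ v ∈ N.A i

/-- The `X`-equivalence: two boundary vertices not in `X` are equivalent iff they lie in
the same superport; each interior vertex and each vertex of `X` forms a singleton class.
For `X = ∅` this is the equivalence relation `∼`. -/
def xSetoid (X : Set (Fin N.n)) : Setoid (Fin N.n) where
  r u v := u = v ∨ (u ∉ X ∧ v ∉ X ∧ N.samePort u v)
  iseqv := by
    constructor
    · intro u; exact Or.inl rfl
    · rintro u v (rfl | ⟨hu, hv, i, hui, hvi⟩)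
      · exact Or.inl rfl
      · exact Or.inr ⟨hv, hu, i, hvi, hui⟩
    · rintro u v w huv hvw
      rcases huv with rfl | ⟨hu, hv, i, hui, hvi⟩
      · exact hvw
      rcases hvw with rfl | ⟨hv', hw, j, hvj, hwj⟩
      · exact Or.inr ⟨hu, hv, i, hui, hvi⟩
      · have hij : i = j := by
          by_contra hij
          exact (Finset.disjoint_left.mp (N.A_disjoint i j hij) hvi) hvj
        exact Or.inr ⟨hu, hw, i, hui, hij ▸ hwj⟩

/-- The quotient of a graph `H` by an equivalence relation `s`: classes `a ≠ b` are
adjacent iff some representatives are adjacent in `H`. -/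
def quotGraph (H : SimpleGraph (Fin N.n)) (s : Setoid (Fin N.n)) :
    SimpleGraph (Quotient s) where
  Adj a b := a ≠ b ∧ ∃ u v, H.Adj u v ∧ Quotient.mk s u = a ∧ Quotient.mk s v = b
  symm := by
    constructor
    rintro a b ⟨hab, u, v, huv, hu, hv⟩
    exact ⟨hab.symm, v, u, huv.symm, hv, hu⟩
  loopless := by
    constructor
    rintro a ⟨hab, -⟩
    exact hab rfl

/-- A spanning forest of the network. -/
def IsSpanningForest (H : SimpleGraph (Fin N.n)) : Prop := H ≤ N.graph ∧ H.IsAcyclic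

/-- A spanning forest becomes a spanning tree in the quotient by the `X`-equivalence
(in the multigraph sense): the quotient is connected and the number of edges of the
forest is one less than the number of equivalence classes.  For `X = {i}` this is
"valid relative to the vertex `i`"; for `X = ∅` this is "valid". -/
def IsValidRel (X : Set (Fin N.n)) (H : SimpleGraph (Fin N.n)) : Prop :=
  N.IsSpanningForest H ∧ (N.quotGraph H (N.xSetoid X)).Connected ∧
    N.edgeCount H + 1 = Nat.card (Quotient (N.xSetoid X))

/-- A valid forest: a spanning forest which becomes a spanning tree in the quotient
by the equivalence `∼`. -/
def IsValidForest (H : SimpleGraph (Fin N.n)) : Prop := N.IsValidRel ∅ H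

/-- The sign `sgn(H, i, j)` of a spanning forest `H` with respect to vertices `i, j`. -/
noncomputable def sgnIJ (H : SimpleGraph (Fin N.n)) (i j : Fin N.n) : ℝ :=
  if i = j ∨ ¬ (N.quotGraph H (N.xSetoid {i, j})).Reachable
      (Quotient.mk (N.xSetoid {i, j}) i) (Quotient.mk (N.xSetoid {i, j}) j)
  then 1 else -1

/-- The type of non-root boundary vertices. -/
abbrev NonRoot := {v : Fin N.n // v ∈ N.M ∧ N.root v ≠ v}

/-- The type of boundary vertices. -/
abbrev Bdry := {v : Fin N.n // v ∈ N.M}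

/-- `L` is the response matrix of the superport network: for any admissible voltages and
currents, the incoming currents at the non-root boundary vertices are obtained from the
prescribed voltage differences by multiplication by `L`. -/
def IsResponse (L : Matrix N.NonRoot N.NonRoot ℝ) : Prop :=
  ∀ (ΔU U : Fin N.n → ℝ) (I : Fin N.n → Fin N.n → ℝ), N.Axioms ΔU U I →
    ∀ x : N.NonRoot, (∑ l, I x.1 l) = ∑ y : N.NonRoot, L x y * ΔU y.1

/-- `C` is the response matrix of the electrical network obtained by unifying all the
superports: same graph and conductances, boundary vertices `M`; axioms (C) and (I). -/
def IsElecResponse (C : Matrix N.Bdry N.Bdry ℝ) : Prop :=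
  ∀ (Ub : N.Bdry → ℝ) (U : Fin N.n → ℝ) (I : Fin N.n → Fin N.n → ℝ),
    (∀ k l, I k l = N.c k l * (U k - U l)) →
    (∀ k, k ∉ N.M → ∑ l, I k l = 0) →
    (∀ v : N.Bdry, U v.1 = Ub v) →
    ∀ v : N.Bdry, (∑ l, I v.1 l) = ∑ u : N.Bdry, C v u * Ub u

/-- The sum of the weights of all valid forests. -/
noncomputable def validForestSum : ℝ :=
  ∑ H ∈ Finset.univ.filter (fun H => N.IsValidForest H), N.weight H

end Network
end Superport

namespace Superport
namespace Network

variable (N : Network)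

/-- The last (maximal) boundary vertex; it is the root of the last superport. -/
noncomputable def lastV : Fin N.n := N.M.max' N.M_nonempty

/-- Boundary vertices other than the last one. -/
abbrev Bdry' := {v : Fin N.n // v ∈ N.M ∧ v ≠ N.lastV}

/-- `C̃`: the response matrix of the unified electrical network with the last row and
column removed. -/
noncomputable def Ctilde (C : Matrix N.Bdry N.Bdry ℝ) : Matrix N.Bdry' N.Bdry' ℝ :=
  fun v w => C ⟨v.1, v.2.1⟩ ⟨w.1, w.2.1⟩

/-- The sum `Σ_{I,J valid} det C_I^J` of all valid minors of `C`: a valid set is a set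
`{i_1,…,i_{p−1}}` with `i_k ∈ A_k` for `k = 1,…,p−1` (hence automatically listed in
increasing order), encoded by the selection functions `ι, κ`. -/
noncomputable def validMinorSum (C : Matrix N.Bdry N.Bdry ℝ) : ℝ :=
  ∑ ι ∈ Finset.univ.filter (fun ι : Fin (N.p - 1) → N.Bdry =>
      ∀ k, (ι k).1 ∈ N.A (Fin.castLE (Nat.sub_le N.p 1) k)),
    ∑ κ ∈ Finset.univ.filter (fun κ : Fin (N.p - 1) → N.Bdry =>
      ∀ k, (κ k).1 ∈ N.A (Fin.castLE (Nat.sub_le N.p 1) k)),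
      Matrix.det (Matrix.of fun k k' => C (ι k) (κ k'))

end Network

end Superport

/-!
Write `E` for the inclusion of the non-root boundary vertices, `P` for the indicator matrix of the
superports other than the last one, and `G = [E P]`. Boundary voltages `x = E Δ + P y` satisfy
(B) for the data `Δ`, and (P) says `Pᵀ C x = 0`, so `y = -B⁻¹ Pᵀ C E Δ` with `B = Pᵀ C P`: the
response matrix `L` is the Schur complement of `B` in `Gᵀ C G`, and
`det (Gᵀ C G) = det B * det L`.

Each column of `G` equals one at a pivot row and vanishes below it; the pivots are exactly the
boundary vertices other than the last one, and the row of the last vertex is zero. So `G` is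
unitriangular after dropping that row, and `det (Gᵀ C G) = det C̃`.

`B` is invertible since `xᵀ C x` is the energy of the harmonic extension of `x`, which vanishes
only for constant `x`, and `P y` vanishes on the last superport. Finally the entries of `B` are
sums of entries of `C` over pairs of superports, so multilinearity of the determinant expands
`det B` into the sum of the valid minors of `C`.
-/

open Matrix

namespace Matrix

theorem det_of_finset_sum {R n β : Type*} [CommRing R] [Fintype n] [DecidableEq n]
    (S : n → Finset β) (g : β → n → R) :
    (of fun i j => ∑ u ∈ S i, g u j).det =
      ∑ ι ∈ Fintype.piFinset S, (of fun i j => g (ι i) j).det := by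
  have hrows : (of fun i j => ∑ u ∈ S i, g u j) = fun i => ∑ u ∈ S i, g u := by
    ext i j
    simp [Finset.sum_apply]
  rw [hrows]
  exact (detRowAlternating (n := n) (R := R)).toMultilinearMap.map_sum_finset
    (fun _ u => g u) S

theorem det_of_finset_sum_sum {R n β γ : Type*} [CommRing R] [Fintype n] [DecidableEq n]
    (S : n → Finset β) (T : n → Finset γ) (f : β → γ → R) :
    (of fun i j => ∑ u ∈ S i, ∑ v ∈ T j, f u v).det =
      ∑ ι ∈ Fintype.piFinset S, ∑ κ ∈ Fintype.piFinset T, (of fun i j => f (ι i) (κ j)).det := by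
  rw [det_of_finset_sum]
  refine sum_congr rfl fun ι _ => ?_
  rw [← det_transpose]
  convert det_of_finset_sum T (fun v i => f (ι i) v) using 2 with κ
  · rfl
  · rw [← det_transpose]
    rfl

end Matrix

namespace Superport

namespace Network

variable (N : Network)

theorem c_nonneg (k l : Fin N.n) : 0 ≤ N.c k l := by
  by_cases h : N.graph.Adj k l
  · exact (N.c_pos k l h).le
  · rw [N.c_zero k l h]

noncomputable def laplacian : Matrix (Fin N.n) (Fin N.n) ℝ :=
  diagonal (fun k => ∑ l, N.c k l) - of N.c

theorem laplacian_mulVec_apply (U : Fin N.n → ℝ) (k : Fin N.n) :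
    (N.laplacian *ᵥ U) k = ∑ l, N.c k l * (U k - U l) := by
  rw [laplacian, sub_mulVec, Pi.sub_apply, mulVec_diagonal]
  simp only [mul_sub, Finset.sum_sub_distrib, Finset.sum_mul]
  rfl

theorem two_mul_dotProduct_laplacian_mulVec (U : Fin N.n → ℝ) :
    2 * (U ⬝ᵥ N.laplacian *ᵥ U) = ∑ k, ∑ l, N.c k l * (U k - U l) ^ 2 := by
  have hswap : ∑ k, ∑ l, N.c k l * (U k * (U k - U l))
      = ∑ k, ∑ l, N.c k l * (-U l * (U k - U l)) := by
    rw [Finset.sum_comm]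
    refine sum_congr rfl fun k _ => sum_congr rfl fun l _ => ?_
    rw [N.c_symm]; ring
  calc 2 * (U ⬝ᵥ N.laplacian *ᵥ U)
      = ∑ k, ∑ l, N.c k l * (U k * (U k - U l))
        + ∑ k, ∑ l, N.c k l * (U k * (U k - U l)) := by
        rw [two_mul]
        simp only [dotProduct, laplacian_mulVec_apply, Finset.mul_sum]
        congr 1 <;> exact sum_congr rfl fun k _ => sum_congr rfl fun l _ => by ring
    _ = ∑ k, ∑ l, N.c k l * (U k - U l) ^ 2 := by
        conv_lhs => arg 2; rw [hswap]
        simp only [← Finset.sum_add_distrib]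
        exact sum_congr rfl fun k _ => sum_congr rfl fun l _ => by ring

theorem eq_of_dotProduct_laplacian_mulVec_eq_zero {U : Fin N.n → ℝ}
    (h : U ⬝ᵥ N.laplacian *ᵥ U = 0) (u v : Fin N.n) : U u = U v := by
  have hterm_nonneg : ∀ k l, 0 ≤ N.c k l * (U k - U l) ^ 2 :=
    fun k l => mul_nonneg (N.c_nonneg k l) (sq_nonneg _)
  have hterm : ∀ k l, N.c k l * (U k - U l) ^ 2 = 0 := by
    have hsum := N.two_mul_dotProduct_laplacian_mulVec U
    rw [h, mul_zero, eq_comm, Finset.sum_eq_zero_iff_of_nonneg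
      fun k _ => Finset.sum_nonneg fun l _ => hterm_nonneg k l] at hsum
    exact fun k l => (Finset.sum_eq_zero_iff_of_nonneg fun l _ => hterm_nonneg k l).mp
      (hsum k (mem_univ k)) l (mem_univ l)
  have hadj : ∀ k l, N.graph.Adj k l → U k = U l := fun k l hkl => by
    simpa [sub_eq_zero, (N.c_pos k l hkl).ne'] using hterm k l
  obtain ⟨w⟩ := N.connected.preconnected u v
  induction w with
  | nil => rfl
  | cons hkl _ ih => exact (hadj _ _ hkl).trans ih

theorem exists_harmonic_extension {S : Finset (Fin N.n)} (hS : S.Nonempty)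
    (x : Fin N.n → ℝ) :
    ∃ U : Fin N.n → ℝ, (∀ v ∈ S, U v = x v) ∧ ∀ k ∉ S, (N.laplacian *ᵥ U) k = 0 := by
  let ι := {k // k ∉ S}
  let ext := Function.ExtendByZero.linearMap ℝ (Subtype.val : ι → Fin N.n)
  have ext_of_mem : ∀ u v, v ∈ S → ext u v = 0 := fun u v hv =>
    Function.extend_apply' _ _ _ fun ⟨k, hk⟩ => k.2 (hk ▸ hv)
  have ext_val : ∀ u (k : ι), ext u k = u k := fun u k =>
    Subtype.val_injective.extend_apply _ _ _
  -- `Φ` is injective by the energy argument, hence onto; a preimage of `-Lx` corrects `x` off `S`.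
  let Φ := LinearMap.funLeft ℝ ℝ (Subtype.val : ι → Fin N.n) ∘ₗ
    N.laplacian.mulVecLin ∘ₗ ext
  have hΦ : Function.Injective Φ := by
    refine (injective_iff_map_eq_zero Φ).mpr fun u hu => ?_
    have hharm : ∀ k ∉ S, (N.laplacian *ᵥ ext u) k = 0 := fun k hk => congrFun hu ⟨k, hk⟩
    have henergy : ext u ⬝ᵥ N.laplacian *ᵥ ext u = 0 := Finset.sum_eq_zero fun k _ => by
      by_cases hk : k ∈ S
      · rw [ext_of_mem u k hk, zero_mul]
      · rw [hharm k hk, mul_zero]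
    obtain ⟨s, hs⟩ := hS
    funext k
    rw [Pi.zero_apply, ← ext_val u k, N.eq_of_dotProduct_laplacian_mulVec_eq_zero henergy k s,
      ext_of_mem u s hs]
  obtain ⟨u, hu⟩ := LinearMap.injective_iff_surjective.mp hΦ
    (fun k : ι => -(N.laplacian *ᵥ x) k)
  refine ⟨x + ext u, fun v hv => by simp [ext_of_mem u v hv], fun k hk => ?_⟩
  have := congrFun hu ⟨k, hk⟩
  simp only [Φ, LinearMap.comp_apply, LinearMap.funLeft_apply, Matrix.mulVecLin_apply] at this
  rw [Matrix.mulVec_add, Pi.add_apply, this, add_neg_cancel]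

theorem exists_potential {C : Matrix N.Bdry N.Bdry ℝ} (hC : N.IsElecResponse C)
    (x : N.Bdry → ℝ) :
    ∃ U : Fin N.n → ℝ, (∀ v : N.Bdry, U v = x v) ∧ (∀ k ∉ N.M, (N.laplacian *ᵥ U) k = 0) ∧
      ∀ v : N.Bdry, (N.laplacian *ᵥ U) v = (C *ᵥ x) v := by
  obtain ⟨U, hUx, hharm⟩ := N.exists_harmonic_extension N.M_nonempty
    (fun v => if h : v ∈ N.M then x ⟨v, h⟩ else 0)
  have hUx' : ∀ v : N.Bdry, U v = x v := fun v => by simp [hUx v v.2]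
  refine ⟨U, hUx', hharm, fun v => ?_⟩
  have := hC x U (fun k l => N.c k l * (U k - U l)) (fun _ _ => rfl)
    (fun k hk => by rw [← laplacian_mulVec_apply, hharm k hk]) hUx' v
  rwa [← laplacian_mulVec_apply] at this

theorem eq_of_dotProduct_mulVec_eq_zero {C : Matrix N.Bdry N.Bdry ℝ}
    (hC : N.IsElecResponse C) {x : N.Bdry → ℝ} (h : x ⬝ᵥ C *ᵥ x = 0) (u v : N.Bdry) :
    x u = x v := by
  obtain ⟨U, hUx, hharm, hcur⟩ := N.exists_potential hC x
  have henergy : U ⬝ᵥ N.laplacian *ᵥ U = 0 := by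
    rw [dotProduct, ← Finset.sum_subset (subset_univ N.M) fun k _ hk => by
      rw [hharm k hk, mul_zero], ← Finset.sum_coe_sort, ← h]
    exact sum_congr rfl fun w _ => by rw [hUx w, hcur w]
  rw [← hUx u, ← hUx v]
  exact N.eq_of_dotProduct_laplacian_mulVec_eq_zero henergy _ _

theorem mem_M_of_mem_A {i : Fin N.p} {v : Fin N.n} (h : v ∈ N.A i) : v ∈ N.M :=
  N.mem_M_iff.mpr ⟨i, h⟩

theorem eq_of_mem_A {i j : Fin N.p} {v : Fin N.n} (hi : v ∈ N.A i) (hj : v ∈ N.A j) :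
    i = j := by
  by_contra hne
  exact Finset.disjoint_left.mp (N.A_disjoint i j hne) hi hj

theorem root_eq_max' {i : Fin N.p} {v : Fin N.n} (h : v ∈ N.A i) :
    N.root v = (N.A i).max' ⟨v, h⟩ := by
  have hex : ∃ j, v ∈ N.A j := ⟨i, h⟩
  rw [root, dif_pos hex]
  obtain rfl : hex.choose = i := N.eq_of_mem_A hex.choose_spec h
  rfl

theorem root_mem_A {i : Fin N.p} {v : Fin N.n} (h : v ∈ N.A i) : N.root v ∈ N.A i := by
  rw [N.root_eq_max' h]
  exact Finset.max'_mem _ _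

theorem root_eq_root {i : Fin N.p} {u v : Fin N.n} (hu : u ∈ N.A i) (hv : v ∈ N.A i) :
    N.root u = N.root v := by
  rw [N.root_eq_max' hu, N.root_eq_max' hv]

theorem root_root {v : Fin N.n} (hv : v ∈ N.M) : N.root (N.root v) = N.root v := by
  obtain ⟨i, hi⟩ := N.mem_M_iff.mp hv
  exact N.root_eq_root (N.root_mem_A hi) hi

theorem mem_A_iff_root_mem_A {v : Fin N.n} (hv : v ∈ N.M) (j : Fin N.p) :
    v ∈ N.A j ↔ N.root v ∈ N.A j := by
  obtain ⟨i, hi⟩ := N.mem_M_iff.mp hv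
  refine ⟨N.root_mem_A, fun h => ?_⟩
  rwa [N.eq_of_mem_A h (N.root_mem_A hi)]

theorem lastV_mem : N.lastV ∈ N.M := N.M.max'_mem _

theorem root_lastV : N.root N.lastV = N.lastV :=
  N.root_eq_self_of_max N.lastV_mem fun u hu => N.M.le_max' u hu

theorem lastV_mem_A_lastPort : N.lastV ∈ N.A N.lastPort := by
  obtain ⟨i, hi⟩ := N.mem_M_iff.mp N.lastV_mem
  obtain ⟨v, hv⟩ := N.A_nonempty N.lastPort
  rcases eq_or_ne i N.lastPort with rfl | hne
  · exact hi
  · have hlt : i < N.lastPort := lt_of_le_of_ne (Fin.le_def.mpr (Nat.le_pred_of_lt i.2)) hne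
    exact absurd (N.M.le_max' v (N.mem_M_of_mem_A hv))
      (not_le.mpr (N.A_ordered _ _ _ _ hlt hi hv))

abbrev nonLastPort (k : Fin (N.p - 1)) : Fin N.p := Fin.castLE (Nat.sub_le N.p 1) k

theorem nonLastPort_ne_lastPort (k : Fin (N.p - 1)) : N.nonLastPort k ≠ N.lastPort := by
  intro h
  have := congrArg Fin.val h
  simp only [Fin.val_castLE, lastPort] at this
  omega

theorem exists_nonLastPort_eq {i : Fin N.p} (hi : i ≠ N.lastPort) :
    ∃ k, N.nonLastPort k = i :=
  ⟨⟨i, by have := i.2; have : (i : ℕ) ≠ N.p - 1 := fun h => hi (Fin.ext h); omega⟩, rfl⟩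

theorem lastV_notMem_A_nonLastPort (k : Fin (N.p - 1)) : N.lastV ∉ N.A (N.nonLastPort k) :=
  fun h => N.nonLastPort_ne_lastPort k (N.eq_of_mem_A h N.lastV_mem_A_lastPort)

noncomputable def nonLastRoot (k : Fin (N.p - 1)) : Fin N.n :=
  (N.A (N.nonLastPort k)).max' (N.A_nonempty _)

theorem nonLastRoot_mem (k : Fin (N.p - 1)) : N.nonLastRoot k ∈ N.A (N.nonLastPort k) :=
  Finset.max'_mem _ _

theorem root_eq_nonLastRoot {k : Fin (N.p - 1)} {v : Fin N.n} (h : v ∈ N.A (N.nonLastPort k)) :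
    N.root v = N.nonLastRoot k :=
  N.root_eq_max' h

abbrev toBdry (z : N.NonRoot) : N.Bdry := ⟨z.1, z.2.1⟩

theorem toBdry_injective : Function.Injective N.toBdry :=
  fun _ _ h => Subtype.ext (congrArg Subtype.val h :)

noncomputable def nonRootIncl : Matrix N.Bdry N.NonRoot ℝ :=
  of fun u z => if u = N.toBdry z then 1 else 0

noncomputable def portIndicator : Matrix N.Bdry (Fin (N.p - 1)) ℝ :=
  of fun u k => if u.1 ∈ N.A (N.nonLastPort k) then 1 else 0

/-- Column `inl z` carries a unit voltage difference at the non-root `z`, column `inr k` lifts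
the `k`-th superport to unit voltage. -/
noncomputable def voltageMap : Matrix N.Bdry (N.NonRoot ⊕ Fin (N.p - 1)) ℝ :=
  fromCols N.nonRootIncl N.portIndicator

theorem transpose_nonRootIncl_mulVec_apply (g : N.Bdry → ℝ) (z : N.NonRoot) :
    (N.nonRootInclᵀ *ᵥ g) z = g (N.toBdry z) := by
  simp [nonRootIncl, mulVec, dotProduct]

theorem nonRootIncl_mulVec_apply (Δ : N.NonRoot → ℝ) (z : N.NonRoot) :
    (N.nonRootIncl *ᵥ Δ) (N.toBdry z) = Δ z := by
  simp [nonRootIncl, mulVec, dotProduct, N.toBdry_injective.eq_iff]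

theorem nonRootIncl_mulVec_root (Δ : N.NonRoot → ℝ) {v : Fin N.n} (hv : v ∈ N.M) :
    (N.nonRootIncl *ᵥ Δ) ⟨N.root v, N.root_mem hv⟩ = 0 := by
  rw [mulVec, dotProduct]
  refine Finset.sum_eq_zero fun z _ => ?_
  have : N.root v ≠ z.1 := fun h => z.2.2 (by rw [← h, N.root_root hv])
  simp [nonRootIncl, toBdry, this]

theorem transpose_portIndicator_mulVec_apply (f : Fin N.n → ℝ) (k : Fin (N.p - 1)) :
    (N.portIndicatorᵀ *ᵥ fun u : N.Bdry => f u) k = ∑ v ∈ N.A (N.nonLastPort k), f v := by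
  have hA : N.M.filter (· ∈ N.A (N.nonLastPort k)) = N.A (N.nonLastPort k) :=
    by rw [Finset.filter_mem_eq_inter, Finset.inter_eq_right]; exact fun _ => N.mem_M_of_mem_A
  simp only [mulVec, dotProduct, transpose_apply, portIndicator, of_apply, ite_mul, one_mul,
    zero_mul]
  rw [Finset.sum_coe_sort N.M (fun v => if v ∈ N.A (N.nonLastPort k) then f v else 0),
    ← Finset.sum_filter, hA]

theorem portIndicator_mulVec_apply_of_mem (y : Fin (N.p - 1) → ℝ) {u : N.Bdry}
    {k : Fin (N.p - 1)} (hu : u.1 ∈ N.A (N.nonLastPort k)) :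
    (N.portIndicator *ᵥ y) u = y k := by
  rw [mulVec, dotProduct, Finset.sum_eq_single k]
  · simp [portIndicator, hu]
  · intro k' _ hk'
    have : u.1 ∉ N.A (N.nonLastPort k') := fun h =>
      hk' (Fin.castLE_injective _ (N.eq_of_mem_A h hu))
    simp [portIndicator, this]
  · simp

theorem portIndicator_lastV (k : Fin (N.p - 1)) :
    N.portIndicator ⟨N.lastV, N.lastV_mem⟩ k = 0 := by
  simp [portIndicator, N.lastV_notMem_A_nonLastPort k]

theorem portIndicator_root {v : Fin N.n} (hv : v ∈ N.M) (k : Fin (N.p - 1)) :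
    N.portIndicator ⟨N.root v, N.root_mem hv⟩ k = N.portIndicator ⟨v, hv⟩ k := by
  simp only [portIndicator, of_apply, ← N.mem_A_iff_root_mem_A hv]

theorem voltageMap_lastV (s : N.NonRoot ⊕ Fin (N.p - 1)) :
    N.voltageMap ⟨N.lastV, N.lastV_mem⟩ s = 0 := by
  rcases s with z | k
  · have : N.lastV ≠ z.1 := fun h => z.2.2 (by rw [← h, N.root_lastV])
    simp [voltageMap, nonRootIncl, toBdry, this]
  · exact N.portIndicator_lastV k

noncomputable def pivot : N.NonRoot ⊕ Fin (N.p - 1) → N.Bdry'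
  | .inl z => ⟨z.1, z.2.1, fun h => z.2.2 (by rw [h, N.root_lastV])⟩
  | .inr k => ⟨N.nonLastRoot k, N.mem_M_of_mem_A (N.nonLastRoot_mem k),
      fun h => N.lastV_notMem_A_nonLastPort k (h ▸ N.nonLastRoot_mem k)⟩

theorem voltageMap_pivot (s : N.NonRoot ⊕ Fin (N.p - 1)) :
    N.voltageMap ⟨(N.pivot s).1, (N.pivot s).2.1⟩ s = 1 := by
  rcases s with z | k
  · simp [voltageMap, nonRootIncl, pivot, toBdry]
  · simp [voltageMap, portIndicator, pivot, N.nonLastRoot_mem k]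

theorem le_pivot_of_voltageMap_ne_zero {u : N.Bdry} {s : N.NonRoot ⊕ Fin (N.p - 1)}
    (h : N.voltageMap u s ≠ 0) : u.1 ≤ (N.pivot s).1 := by
  rcases s with z | k
  · have : u = N.toBdry z := by by_contra hne; simp [voltageMap, nonRootIncl, hne] at h
    exact (congrArg Subtype.val this).le
  · have : u.1 ∈ N.A (N.nonLastPort k) := by
      by_contra hu
      simp [voltageMap, portIndicator, hu] at h
    exact Finset.le_max' _ _ this

theorem pivot_injective : Function.Injective N.pivot := by
  have root_ne : ∀ (z : N.NonRoot) k, z.1 ≠ N.nonLastRoot k := fun z k h =>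
    z.2.2 (by rw [h, N.root_eq_nonLastRoot (N.nonLastRoot_mem k)])
  rintro (z | k) (z' | k') h <;> have h := congrArg Subtype.val h <;> simp only [pivot] at h
  · exact congrArg Sum.inl (Subtype.ext h)
  · exact absurd h (root_ne z k')
  · exact absurd h.symm (root_ne z' k)
  · refine congrArg Sum.inr (Fin.castLE_injective _ (N.eq_of_mem_A (N.nonLastRoot_mem k) ?_))
    exact h ▸ N.nonLastRoot_mem k'

theorem pivot_surjective : Function.Surjective N.pivot := by
  rintro ⟨w, hwM, hw⟩
  by_cases hroot : N.root w = w
  · obtain ⟨i, hi⟩ := N.mem_M_iff.mp hwM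
    have hi' : i ≠ N.lastPort := by
      rintro rfl
      exact hw (by rw [← hroot, N.root_eq_root hi N.lastV_mem_A_lastPort, N.root_lastV])
    obtain ⟨k, rfl⟩ := N.exists_nonLastPort_eq hi'
    exact ⟨.inr k, Subtype.ext ((N.root_eq_nonLastRoot hi).symm.trans hroot)⟩
  · exact ⟨.inl ⟨w, hwM, hroot⟩, rfl⟩

noncomputable def pivotEquiv : (N.NonRoot ⊕ Fin (N.p - 1)) ≃ N.Bdry' :=
  Equiv.ofBijective N.pivot ⟨N.pivot_injective, N.pivot_surjective⟩

theorem sum_bdry_eq_sum_bdry' {f : N.Bdry → ℝ} (hf : f ⟨N.lastV, N.lastV_mem⟩ = 0) :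
    ∑ u, f u = ∑ w : N.Bdry', f ⟨w.1, w.2.1⟩ := by
  let incl : N.Bdry' ↪ N.Bdry := ⟨fun w => ⟨w.1, w.2.1⟩, fun w w' h => Subtype.ext
    (congrArg Subtype.val h :)⟩
  rw [show ∑ w : N.Bdry', f ⟨w.1, w.2.1⟩ = ∑ w : N.Bdry', f (incl w) from rfl,
    ← Finset.sum_map univ incl f]
  refine (Finset.sum_subset (subset_univ _) fun u _ hu => ?_).symm
  obtain rfl : u = ⟨N.lastV, N.lastV_mem⟩ := by
    by_contra h
    exact hu (mem_map.mpr ⟨⟨u.1, u.2, fun h' => h (Subtype.ext h')⟩, mem_univ _, rfl⟩)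
  exact hf

noncomputable def pivotMatrix : Matrix N.Bdry' N.Bdry' ℝ :=
  of fun w w' => N.voltageMap ⟨w.1, w.2.1⟩ (N.pivotEquiv.symm w')

theorem det_pivotMatrix : N.pivotMatrix.det = 1 := by
  have hpivot : ∀ w', N.pivot (N.pivotEquiv.symm w') = w' := N.pivotEquiv.apply_symm_apply
  have htri : N.pivotMatrix.IsUpperTriangular := fun w w' hlt => by
    by_contra h
    have := N.le_pivot_of_voltageMap_ne_zero h
    rw [hpivot] at this
    exact absurd this (not_le.mpr hlt)
  rw [det_of_isUpperTriangular htri]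
  refine Finset.prod_eq_one fun w _ => ?_
  have := N.voltageMap_pivot (N.pivotEquiv.symm w)
  rwa [hpivot] at this

theorem det_transpose_voltageMap_mul_mul_eq_det_Ctilde (C : Matrix N.Bdry N.Bdry ℝ) :
    (N.voltageMapᵀ * C * N.voltageMap).det = (N.Ctilde C).det := by
  have hreduce : N.voltageMapᵀ * C * N.voltageMap =
      (N.pivotMatrixᵀ * N.Ctilde C * N.pivotMatrix).submatrix N.pivotEquiv N.pivotEquiv := by
    ext s s'
    simp only [mul_apply, transpose_apply, submatrix_apply, pivotMatrix, Ctilde, of_apply,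
      Equiv.symm_apply_apply]
    rw [N.sum_bdry_eq_sum_bdry' (by rw [N.voltageMap_lastV, mul_zero])]
    refine sum_congr rfl fun w' _ => ?_
    rw [N.sum_bdry_eq_sum_bdry' (by rw [N.voltageMap_lastV, zero_mul])]
  rw [hreduce, det_submatrix_equiv_self, det_mul, det_mul, det_transpose, det_pivotMatrix,
    one_mul, mul_one]

noncomputable def portResponse (C : Matrix N.Bdry N.Bdry ℝ) :
    Matrix (Fin (N.p - 1)) (Fin (N.p - 1)) ℝ :=
  N.portIndicatorᵀ * C * N.portIndicator

theorem transpose_voltageMap_mul_mul_eq_fromBlocks (C : Matrix N.Bdry N.Bdry ℝ) :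
    N.voltageMapᵀ * C * N.voltageMap =
      fromBlocks (N.nonRootInclᵀ * C * N.nonRootIncl) (N.nonRootInclᵀ * C * N.portIndicator)
        (N.portIndicatorᵀ * C * N.nonRootIncl) (N.portResponse C) := by
  rw [voltageMap, transpose_fromCols, fromRows_mul, fromRows_mul_fromCols, portResponse]

theorem det_portResponse_ne_zero {C : Matrix N.Bdry N.Bdry ℝ} (hC : N.IsElecResponse C) :
    (N.portResponse C).det ≠ 0 := by
  intro hdet
  obtain ⟨y, hy0, hy⟩ := exists_mulVec_eq_zero_iff.mpr hdet
  have hx : (N.portIndicator *ᵥ y) ⬝ᵥ C *ᵥ (N.portIndicator *ᵥ y) = 0 := by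
    have : y ⬝ᵥ N.portResponse C *ᵥ y =
        (N.portIndicator *ᵥ y) ⬝ᵥ C *ᵥ (N.portIndicator *ᵥ y) := by
      rw [portResponse, ← mulVec_mulVec, ← mulVec_mulVec, dotProduct_mulVec, vecMul_transpose]
    rw [← this, hy, dotProduct_zero]
  have hx_last : (N.portIndicator *ᵥ y) ⟨N.lastV, N.lastV_mem⟩ = 0 := by
    simp [mulVec, dotProduct, N.portIndicator_lastV]
  refine hy0 (funext fun k => ?_)
  obtain ⟨u, hu⟩ := N.A_nonempty (N.nonLastPort k)
  rw [Pi.zero_apply,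
    ← N.portIndicator_mulVec_apply_of_mem y (u := ⟨u, N.mem_M_of_mem_A hu⟩) hu,
    N.eq_of_dotProduct_mulVec_eq_zero hC hx _ ⟨N.lastV, N.lastV_mem⟩, hx_last]

theorem portResponse_apply (C : Matrix N.Bdry N.Bdry ℝ) (k k' : Fin (N.p - 1)) :
    N.portResponse C k k' =
      ∑ u ∈ univ.filter (fun u : N.Bdry => u.1 ∈ N.A (N.nonLastPort k)),
      ∑ v ∈ univ.filter (fun v : N.Bdry => v.1 ∈ N.A (N.nonLastPort k')), C u v := by
  simp only [portResponse, mul_apply, transpose_apply, portIndicator, of_apply, Finset.sum_mul,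
    Finset.sum_filter]
  rw [Finset.sum_comm]
  refine sum_congr rfl fun u _ => ?_
  split_ifs <;> simp

theorem validMinorSum_eq_det_portResponse (C : Matrix N.Bdry N.Bdry ℝ) :
    N.validMinorSum C = (N.portResponse C).det := by
  have hvalid : univ.filter (fun ι : Fin (N.p - 1) → N.Bdry =>
      ∀ k, (ι k).1 ∈ N.A (N.nonLastPort k)) =
      Fintype.piFinset fun k => univ.filter fun u : N.Bdry => u.1 ∈ N.A (N.nonLastPort k) := by
    ext ι
    simp
  have hB : N.portResponse C = of fun k k' =>
      ∑ u ∈ univ.filter (fun u : N.Bdry => u.1 ∈ N.A (N.nonLastPort k)),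
        ∑ v ∈ univ.filter (fun v : N.Bdry => v.1 ∈ N.A (N.nonLastPort k')), C u v :=
    Matrix.ext (N.portResponse_apply C)
  rw [validMinorSum, hvalid, hB, Matrix.det_of_finset_sum_sum _ _ fun u v => C u v]

theorem voltage_sub_voltage_root (Δ : N.NonRoot → ℝ) (y : Fin (N.p - 1) → ℝ) (z : N.NonRoot) :
    (N.nonRootIncl *ᵥ Δ + N.portIndicator *ᵥ y) (N.toBdry z) -
      (N.nonRootIncl *ᵥ Δ + N.portIndicator *ᵥ y) ⟨N.root z, N.root_mem z.2.1⟩ = Δ z := by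
  have hport : (N.portIndicator *ᵥ y) ⟨N.root z, N.root_mem z.2.1⟩ =
      (N.portIndicator *ᵥ y) (N.toBdry z) := by
    simp only [mulVec, dotProduct]
    exact sum_congr rfl fun k _ => by rw [N.portIndicator_root z.2.1]
  rw [Pi.add_apply, Pi.add_apply, hport, N.nonRootIncl_mulVec_apply,
    N.nonRootIncl_mulVec_root Δ z.2.1]
  ring

theorem response_mulVec_eq {C : Matrix N.Bdry N.Bdry ℝ} (hC : N.IsElecResponse C)
    {L : Matrix N.NonRoot N.NonRoot ℝ} (hL : N.IsResponse L) (Δ : N.NonRoot → ℝ)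
    (y : Fin (N.p - 1) → ℝ)
    (hy : N.portIndicatorᵀ *ᵥ C *ᵥ (N.nonRootIncl *ᵥ Δ + N.portIndicator *ᵥ y) = 0) :
    L *ᵥ Δ = N.nonRootInclᵀ *ᵥ C *ᵥ (N.nonRootIncl *ᵥ Δ + N.portIndicator *ᵥ y) := by
  set x := N.nonRootIncl *ᵥ Δ + N.portIndicator *ᵥ y
  obtain ⟨U, hUx, hharm, hcur⟩ := N.exists_potential hC x
  have hax : N.Axioms (fun k => U k - U (N.root k)) U (fun k l => N.c k l * (U k - U l)) := by
    refine ⟨fun _ _ => rfl, fun k hk => ?_, fun i hi => ?_, fun _ _ _ => rfl⟩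
    · rw [← laplacian_mulVec_apply, hharm k hk]
    · obtain ⟨k, rfl⟩ := N.exists_nonLastPort_eq hi
      simp_rw [← laplacian_mulVec_apply]
      rw [← transpose_portIndicator_mulVec_apply, show (fun u : N.Bdry => (N.laplacian *ᵥ U) u)
        = C *ᵥ x from funext hcur, hy, Pi.zero_apply]
  have hdiff : ∀ y : N.NonRoot, U y - U (N.root y) = Δ y := fun y => by
    rw [show U y = x (N.toBdry y) from hUx (N.toBdry y),
      show U (N.root y) = x ⟨N.root y, N.root_mem y.2.1⟩ from hUx ⟨_, N.root_mem y.2.1⟩]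
    exact N.voltage_sub_voltage_root Δ _ y
  funext z
  calc (L *ᵥ Δ) z = ∑ y, L z y * (U y - U (N.root y)) := by
        simp only [mulVec, dotProduct, hdiff]
    _ = ∑ l, N.c z l * (U z - U l) := (hL _ _ _ hax z).symm
    _ = (C *ᵥ x) (N.toBdry z) := by
        rw [← laplacian_mulVec_apply]; exact hcur (N.toBdry z)
    _ = (N.nonRootInclᵀ *ᵥ C *ᵥ x) z := (N.transpose_nonRootIncl_mulVec_apply _ z).symm

theorem response_eq_schur {C : Matrix N.Bdry N.Bdry ℝ} (hC : N.IsElecResponse C)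
    {L : Matrix N.NonRoot N.NonRoot ℝ} (hL : N.IsResponse L) [Invertible (N.portResponse C)] :
    L = N.nonRootInclᵀ * C * N.nonRootIncl - N.nonRootInclᵀ * C * N.portIndicator *
      ⅟(N.portResponse C) * (N.portIndicatorᵀ * C * N.nonRootIncl) := by
  refine toLin'.injective (LinearMap.ext fun Δ => ?_)
  rw [toLin'_apply, toLin'_apply]
  set y := -(⅟(N.portResponse C) *ᵥ (N.portIndicatorᵀ * C * N.nonRootIncl) *ᵥ Δ)
  have hB : N.portIndicatorᵀ * C * N.portIndicator * ⅟(N.portResponse C) = 1 :=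
    mul_invOf_self (N.portResponse C)
  have hy : N.portIndicatorᵀ *ᵥ C *ᵥ (N.nonRootIncl *ᵥ Δ + N.portIndicator *ᵥ y) = 0 := by
    simp only [y, mulVec_add, mulVec_neg, mulVec_mulVec, ← Matrix.mul_assoc, hB, Matrix.one_mul,
      add_neg_cancel]
  rw [N.response_mulVec_eq hC hL Δ y hy]
  simp only [y, mulVec_add, mulVec_neg, mulVec_mulVec, sub_eq_add_neg, add_mulVec, neg_mulVec,
    ← Matrix.mul_assoc]

end Network

theorem det_response_eq_det_Ctilde_div_validMinorSum_general (N : Network)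
    (L : Matrix N.NonRoot N.NonRoot ℝ) (hL : N.IsResponse L)
    (C : Matrix N.Bdry N.Bdry ℝ) (hC : N.IsElecResponse C) :
    N.validMinorSum C ≠ 0 ∧
    L.det * N.validMinorSum C = (N.Ctilde C).det := by
  have hB := N.det_portResponse_ne_zero hC
  have hBinv := (N.portResponse C).invertibleOfIsUnitDet hB.isUnit
  rw [N.validMinorSum_eq_det_portResponse]
  refine ⟨hB, ?_⟩
  rw [← N.det_transpose_voltageMap_mul_mul_eq_det_Ctilde,
    N.transpose_voltageMap_mul_mul_eq_fromBlocks, det_fromBlocks₂₂, N.response_eq_schur hC hL,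
    mul_comm]

/-- **Lemma 8.3**: `det L = det C̃ / Σ_{I,J valid} det C_I^J`, where the sum is over all
pairs of valid sets of rows and columns. -/
theorem det_response_eq_det_Ctilde_div_validMinorSum (N : Network) (hmp : N.p < N.m)
    (L : Matrix N.NonRoot N.NonRoot ℝ) (hL : N.IsResponse L)
    (C : Matrix N.Bdry N.Bdry ℝ) (hC : N.IsElecResponse C) :
    N.validMinorSum C ≠ 0 ∧
    L.det * N.validMinorSum C = (N.Ctilde C).det :=
  det_response_eq_det_Ctilde_div_validMinorSum_general N L hL C hC

end Superport
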